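/- arXiv:1804.06449 — 7 statements merged into one kernel-verified Lean document; each statement's English description precedes it below -/
import Mathlib

section
/- For all nonnegative integers m (with the Tribonacci sequence extended to negative indices via T_{-m} = 2·T_{-m+3} − T_{-m+4}), one has T_{-m} = T_{m-1}² − T_{m-2}·T_m. -/
/-- Tribonacci numbers on the naturals. -/
def tribN : ℕ → ℤ
  | 0 => 0
  | 1 => 1
  | 2 => 1
  | n + 3 => tribN (n + 2) + tribN (n + 1) + tribN n

/-- Tribonacci at negative indices: `tribNeg n = T (-n)`, via `T (-n) = 2·T (3-n) - T (4-n)`. -/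
def tribNeg : ℕ → ℤ
  | 0 => tribN 0
  | 1 => 2 * tribN 2 - tribN 3
  | 2 => 2 * tribN 1 - tribN 2
  | 3 => 2 * tribN 0 - tribN 1
  | 4 => 2 * tribNeg 1 - tribN 0
  | n + 5 => 2 * tribNeg (n + 2) - tribNeg (n + 1)

/-- Tribonacci sequence extended to all integers. -/
def T (m : ℤ) : ℤ := if 0 ≤ m then tribN m.toNat else tribNeg (-m).toNat

def g (k : ℕ) : ℤ := tribN (k + 1) ^ 2 - tribN k * tribN (k + 2)

lemma key (n : ℕ) : g (n + 4) = 2 * g (n + 1) - g n := by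
  show tribN (n + 5) ^ 2 - tribN (n + 4) * tribN (n + 6) =
    2 * (tribN (n + 2) ^ 2 - tribN (n + 1) * tribN (n + 3)) -
      (tribN (n + 1) ^ 2 - tribN n * tribN (n + 2))
  simp only [show n + 6 = (n + 3) + 3 from rfl, show n + 5 = (n + 2) + 3 from rfl,
    show n + 4 = (n + 1) + 3 from rfl, tribN]
  ring

lemma negEq : ∀ k, tribNeg (k + 2) = g k := by
  have H : ∀ n, tribNeg (n + 2) = g n ∧ tribNeg (n + 3) = g (n + 1) ∧
      tribNeg (n + 4) = g (n + 2) ∧ tribNeg (n + 5) = g (n + 3) := by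
    intro n
    induction n with
    | zero => refine ⟨?_, ?_, ?_, ?_⟩ <;> simp [tribNeg, tribN, g]
    | succ n ih =>
      obtain ⟨h0, h1, h2, h3⟩ := ih
      refine ⟨h1, h2, h3, ?_⟩
      show tribNeg (n + 6) = g (n + 4)
      have : tribNeg (n + 6) = 2 * tribNeg (n + 3) - tribNeg (n + 2) := rfl
      rw [this, h1, h0, key]
  exact fun k => (H k).1

theorem stmt1 : ∀ m : ℕ,
    T (-(m : ℤ)) = T ((m : ℤ) - 1) ^ 2 - T ((m : ℤ) - 2) * T (m : ℤ) := by
  intro m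
  match m with
  | 0 => simp [T, tribN, tribNeg]
  | 1 =>
    norm_num [T]
    simp [tribN, tribNeg]
  | (n + 2) =>
    have h1 : T (-((n + 2 : ℕ) : ℤ)) = tribNeg (n + 2) := by
      simp only [T, if_neg (by push_cast; omega : ¬ (0 : ℤ) ≤ -((n + 2 : ℕ) : ℤ))]
      norm_num
      congr 1
    have h2 : T (((n + 2 : ℕ) : ℤ) - 1) = tribN (n + 1) := by
      simp only [T, if_pos (by push_cast; omega : (0 : ℤ) ≤ ((n + 2 : ℕ) : ℤ) - 1)]
      congr 1
      omega
    have h3 : T (((n + 2 : ℕ) : ℤ) - 2) = tribN n := by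
      simp only [T, if_pos (by push_cast; omega : (0 : ℤ) ≤ ((n + 2 : ℕ) : ℤ) - 2)]
      congr 1
      omega
    have h4 : T ((n + 2 : ℕ) : ℤ) = tribN (n + 2) := by
      simp only [T, if_pos (Int.natCast_nonneg _)]
      norm_num
      congr 1
    rw [h1, h2, h3, h4, negEq]
    rfl
end

section
/- Let {X_m} be a sequence of complex numbers indexed by the integers satisfying X_m = f_1·X_{m-a} + f_2·X_{m-b} for all integers m, where f_1, f_2 are nonzero complex constants and a, b are integers. Then for every integer m and nonnegative integer k: ∑_{j=0}^{k} X_{m−(b−a)k+a+(b−a)j}/(−f_2/f_1)^j = f_1·X_m/(−f_2/f_1)^k + f_2·X_{m−(k+1)(b−a)}. -/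
/-!
Put `r = -f₂/f₁` and `d = b - a`, so that `f₂ = -f₁ r` and the recurrence, read at `n + a`, becomes
`X (n + a) = f₁ (X n - r X (n - d))`. Dividing by `r ^ j`, the `j`-th summand is therefore
`f₁ r (G (j + 1) - G j)` with `G j = X (m - (k + 1) d + d j) / r ^ j`, and the sum telescopes.
-/

open Finset

theorem sum_range_div_pow_eq_of_shift {K : Type*} [Field K] (X : ℤ → K) (c r : K) (hr : r ≠ 0)
    (a d : ℤ) (hX : ∀ n, X (n + a) = c * (X n - r * X (n - d))) (m : ℤ) (k : ℕ) :
    ∑ j ∈ range (k + 1), X (m - d * k + a + d * j) / r ^ j =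
      c * X m / r ^ k - c * r * X (m - (k + 1) * d) := by
  set G : ℕ → K := fun j ↦ X (m - (k + 1) * d + d * j) / r ^ j
  have hterm : ∀ j : ℕ, X (m - d * k + a + d * j) / r ^ j = c * r * (G (j + 1) - G j) := by
    intro j
    have h := hX (m - (k + 1) * d + d * (j + 1))
    rw [show m - (k + 1) * d + d * (j + 1) + a = m - d * k + a + d * j by ring,
      show m - (k + 1) * d + d * (j + 1) - d = m - (k + 1) * d + d * j by ring] at h
    simp only [G, h]
    push_cast
    field_simp
    ring
  have hG₀ : G 0 = X (m - (k + 1) * d) := by simp [G]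
  have hG : G (k + 1) = X m / r ^ (k + 1) := by
    simp only [G]
    congr 2
    push_cast
    ring
  rw [sum_congr rfl fun j _ ↦ hterm j, ← mul_sum, sum_range_sub, hG, hG₀, pow_succ]
  field_simp

theorem stmt4 (X : ℤ → ℂ) (f₁ f₂ : ℂ) (hf₁ : f₁ ≠ 0) (hf₂ : f₂ ≠ 0) (a b : ℤ)
    (hX : ∀ m : ℤ, X m = f₁ * X (m - a) + f₂ * X (m - b)) :
    ∀ (m : ℤ) (k : ℕ),
      ∑ j ∈ Finset.range (k + 1), X (m - (b - a) * k + a + (b - a) * j) / (-f₂ / f₁) ^ j =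
        f₁ * X m / (-f₂ / f₁) ^ k + f₂ * X (m - (k + 1) * (b - a)) := by
  intro m k
  have hshift : ∀ n, X (n + a) = f₁ * (X n - -f₂ / f₁ * X (n - (b - a))) := by
    intro n
    rw [hX, add_sub_cancel_right, show n + a - b = n - (b - a) by ring]
    field_simp
    ring
  rw [sum_range_div_pow_eq_of_shift X f₁ _ (by simp [hf₁, hf₂]) a (b - a) hshift]
  field_simp
  ring
end

section
/- For every integer m and nonnegative integer k: ∑_{j=0}^{k} 2^{−j}·T_{m−k−4+j} = 2·T_{m−k−1} − 2^{−k}·T_m. -/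
lemma tribN_rec (n : ℕ) : tribN n = 2 * tribN (n + 3) - tribN (n + 4) := by
  have h1 : tribN (n + 3) = tribN (n + 2) + tribN (n + 1) + tribN n := rfl
  have h2 : tribN (n + 4) = tribN (n + 3) + tribN (n + 2) + tribN (n + 1) := rfl
  linarith

lemma tribNeg_rec (n : ℕ) : tribNeg (n + 4) = 2 * tribNeg (n + 1) - tribNeg n := by
  cases n with
  | zero => rfl
  | succ k => rfl

lemma T_ofNat (n : ℕ) : T n = tribN n := by simp [T]

lemma T_neg (n : ℕ) : T (-(n : ℤ)) = tribNeg n := by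
  cases n with
  | zero => rfl
  | succ k =>
      have h : ¬ (0 : ℤ) ≤ -((k : ℤ) + 1) := by omega
      simp only [T]
      rw [if_neg (by push_cast; omega)]
      norm_num

lemma lemA (m : ℤ) : T (m - 4) = 2 * T (m - 1) - T m := by
  obtain ⟨n, rfl | rfl⟩ := Int.eq_nat_or_neg m
  · match n with
    | 0 => decide
    | 1 => decide
    | 2 => decide
    | 3 => decide
    | (k + 4) =>
        have e1 : ((k + 4 : ℕ) : ℤ) - 4 = (k : ℤ) := by push_cast; ring
        have e2 : ((k + 4 : ℕ) : ℤ) - 1 = ((k + 3 : ℕ) : ℤ) := by push_cast; ring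
        rw [e1, e2, T_ofNat, T_ofNat, T_ofNat]
        exact tribN_rec k
  · have e1 : -(n : ℤ) - 4 = -((n + 4 : ℕ) : ℤ) := by push_cast; ring
    have e2 : -(n : ℤ) - 1 = -((n + 1 : ℕ) : ℤ) := by push_cast; ring
    rw [e1, e2, T_neg, T_neg, T_neg]
    exact tribNeg_rec n

theorem stmt5 : ∀ (m : ℤ) (k : ℕ),
    ∑ j ∈ Finset.range (k + 1), (2 : ℚ) ^ (-(j : ℤ)) * (T (m - k - 4 + j) : ℚ) =
      2 * (T (m - k - 1) : ℚ) - (2 : ℚ) ^ (-(k : ℤ)) * (T m : ℚ) := by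
  intro m k
  induction k generalizing m with
  | zero =>
      rw [Finset.sum_range_one]
      have hA := lemA m
      have e : m - ((0:ℕ):ℤ) - 4 + ((0:ℕ):ℤ) = m - 4 := by push_cast; ring
      have e1 : m - ((0:ℕ):ℤ) - 1 = m - 1 := by push_cast; ring
      rw [e, e1, hA]
      push_cast
      norm_num
  | succ k ih =>
      rw [Finset.sum_range_succ']
      have hstep : ∀ j ∈ Finset.range (k + 1),
          (2 : ℚ) ^ (-((j + 1 : ℕ) : ℤ)) * (T (m - (k + 1 : ℕ) - 4 + (j + 1 : ℕ)) : ℚ)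
            = (1 / 2) * ((2 : ℚ) ^ (-(j : ℤ)) * (T (m - k - 4 + j) : ℚ)) := by
        intro j _
        have e : m - (k + 1 : ℕ) - 4 + (j + 1 : ℕ) = m - k - 4 + j := by push_cast; ring
        rw [e]
        have : (2 : ℚ) ^ (-((j + 1 : ℕ) : ℤ)) = (1 / 2) * (2 : ℚ) ^ (-(j : ℤ)) := by
          push_cast
          rw [neg_add, zpow_add₀ (by norm_num : (2:ℚ) ≠ 0)]
          norm_num
          ring
        rw [this]; ring
      rw [Finset.sum_congr rfl hstep, ← Finset.mul_sum, ih m]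
      have hA := lemA (m - k - 1)
      have e0 : m - (k + 1 : ℕ) - 4 + (0 : ℕ) = (m - k - 1) - 4 := by push_cast; ring
      have e1 : m - (k + 1 : ℕ) - 1 = (m - k - 1) - 1 := by push_cast; ring
      have e2 : (2 : ℚ) ^ (-((k + 1 : ℕ) : ℤ)) = (1 / 2) * (2 : ℚ) ^ (-(k : ℤ)) := by
        push_cast
        rw [neg_add, zpow_add₀ (by norm_num : (2:ℚ) ≠ 0)]
        norm_num
        ring
      rw [e0, e1, e2]
      push_cast [hA]
      ring
end

section
/- For every integer m and nonnegative integer k: ∑_{j=0}^{k} 2^j·T_{m−3k+1+3j} = 2^{k+1}·T_m − T_{m−3k−3}. -/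
lemma tribN_key (a : ℕ) : tribN a = 2 * tribN (a+3) - tribN (a+4) := by
  have h3 : tribN (a+3) = tribN (a+2) + tribN (a+1) + tribN a := rfl
  have h4 : tribN (a+4) = tribN (a+3) + tribN (a+2) + tribN (a+1) := rfl
  rw [h4, h3]; ring

lemma T_key (n : ℤ) : T n = 2 * T (n+3) - T (n+4) := by
  rcases le_or_gt 0 n with h | h
  · rw [T, T, T, if_pos h, if_pos (by omega), if_pos (by omega),
      show (n+3).toNat = n.toNat + 3 by omega, show (n+4).toNat = n.toNat + 4 by omega]
    exact tribN_key n.toNat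
  · rcases le_or_gt (-4) n with h2 | h2
    · interval_cases n <;> decide
    · obtain ⟨j, rfl⟩ : ∃ j : ℕ, n = -((j:ℤ)+5) := ⟨(-n-5).toNat, by omega⟩
      rw [T, T, T, if_neg (by omega), if_neg (by omega), if_neg (by omega),
        show (-(-((j:ℤ)+5))).toNat = j+5 by omega,
        show (-((-((j:ℤ)+5))+3)).toNat = j+2 by omega,
        show (-((-((j:ℤ)+5))+4)).toNat = j+1 by omega,
        tribNeg]

theorem stmt7 : ∀ (m : ℤ) (k : ℕ),
    ∑ j ∈ Finset.range (k + 1), 2 ^ j * T (m - 3 * k + 1 + 3 * j) =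
      2 ^ (k + 1) * T m - T (m - 3 * k - 3) := by
  intro m k
  induction k with
  | zero =>
    have h := T_key (m - 3)
    rw [show m - 3 + 3 = m by ring] at h
    rw [Finset.sum_range_one]
    push_cast
    rw [show m - 0 + 1 + 0 = m - 3 + 4 by ring,
      show m - 0 - 3 = m - 3 by ring]
    simp only [pow_zero, pow_one, one_mul]
    linarith
  | succ k ih =>
    rw [Finset.sum_range_succ']
    push_cast
    have e : ∀ j ∈ Finset.range (k+1),
        2^(j+1) * T (m - 3*((k:ℤ)+1) + 1 + 3*((j:ℤ)+1)) =
        2 * (2^j * T (m - 3*(k:ℤ) + 1 + 3*(j:ℤ))) := by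
      intro j _
      rw [show m - 3*((k:ℤ)+1) + 1 + 3*((j:ℤ)+1) = m - 3*(k:ℤ) + 1 + 3*(j:ℤ) by ring,
        pow_succ]
      ring
    rw [Finset.sum_congr rfl e, ← Finset.mul_sum, ih]
    have h := T_key (m - 3*(k:ℤ) - 6)
    rw [show m - 3*((k:ℤ)+1) + 1 + 0 = m - 3*(k:ℤ) - 6 + 4 by ring,
      show m - 3*((k:ℤ)+1) - 3 = m - 3*(k:ℤ) - 6 by ring,
      show m - 3*(k:ℤ) - 3 = m - 3*(k:ℤ) - 6 + 3 by ring]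
    simp only [pow_succ]
    linarith
end

section
/- For every integer k ≥ 1: ∑_{j=0}^{k} 2^j·T_{3j} = 2^{k+1}·T_{3k−1}, where T is the Tribonacci sequence. -/
lemma aux : ∀ n : ℕ,
    ∑ j ∈ Finset.range (n + 2), 2 ^ j * tribN (3 * j) = 2 ^ (n + 2) * tribN (3 * n + 2) := by
  intro n
  induction n with
  | zero => simp [tribN]; decide
  | succ m ih =>
    rw [Finset.sum_range_succ, ih]
    have h3 : 3 * (m + 2) = 3 * m + 6 := by ring
    have h4 : 3 * (m + 1) + 2 = 3 * m + 5 := by ring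
    rw [h3, h4]
    have e1 : tribN (3 * m + 3) = tribN (3 * m + 2) + tribN (3 * m + 1) + tribN (3 * m) := rfl
    have e2 : tribN (3 * m + 4) = tribN (3 * m + 3) + tribN (3 * m + 2) + tribN (3 * m + 1) := rfl
    have e3 : tribN (3 * m + 5) = tribN (3 * m + 4) + tribN (3 * m + 3) + tribN (3 * m + 2) := rfl
    have e4 : tribN (3 * m + 6) = tribN (3 * m + 5) + tribN (3 * m + 4) + tribN (3 * m + 3) := rfl
    rw [e4, e3, e2, e1]
    ring

theorem stmt11 : ∀ k : ℕ, 1 ≤ k →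
    ∑ j ∈ Finset.range (k + 1), 2 ^ j * tribN (3 * j) = 2 ^ (k + 1) * tribN (3 * k - 1) := by
  rintro (_|n) h
  · omega
  · have : 3 * (n + 1) - 1 = 3 * n + 2 := by omega
    rw [this]
    exact aux n
end

section
/- Let X : ℤ → ℂ satisfy X_m = f_1·X_{m−a} + f_2·X_{m−b} for all integers m, with f_1, f_2 nonzero complex constants and a, b integers. Then for every integer m and nonnegative integer k: ∑_{j=0}^{k} C(k,j)·(f_1/f_2)^j·X_{m−bk+(b−a)j} = X_m/f_2^k. -/
theorem stmt15 (X : ℤ → ℂ) (f₁ f₂ : ℂ) (hf₁ : f₁ ≠ 0) (hf₂ : f₂ ≠ 0) (a b : ℤ)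
    (hX : ∀ m : ℤ, X m = f₁ * X (m - a) + f₂ * X (m - b)) :
    ∀ (m : ℤ) (k : ℕ),
      ∑ j ∈ Finset.range (k + 1),
          (k.choose j : ℂ) * (f₁ / f₂) ^ j * X (m - b * k + (b - a) * j) =
        X m / f₂ ^ k := by
  intro m k
  induction k generalizing m with
  | zero => simp
  | succ k ih =>
    have hA : ∑ j ∈ Finset.range (k + 1),
        (k.choose j : ℂ) * (f₁ / f₂) ^ (j + 1) * X (m - b * (k + 1 : ℕ) + (b - a) * ((j : ℤ) + 1))
        = (f₁ / f₂) * (X (m - a) / f₂ ^ k) := by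
      rw [← ih (m - a), Finset.mul_sum]
      refine Finset.sum_congr rfl fun j hj => ?_
      have h : m - b * ((k : ℤ) + 1) + (b - a) * ((j : ℤ) + 1) = (m - a) - b * k + (b - a) * j := by
        ring
      push_cast
      rw [h]; ring
    have hB : ∑ j ∈ Finset.range (k + 2),
        (k.choose j : ℂ) * (f₁ / f₂) ^ j * X (m - b * (k + 1 : ℕ) + (b - a) * j)
        = X (m - b) / f₂ ^ k := by
      rw [Finset.sum_range_succ, Nat.choose_succ_self]
      rw [← ih (m - b)]
      simp only [Nat.cast_zero, zero_mul, add_zero]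
      refine Finset.sum_congr rfl fun j hj => ?_
      have h : m - b * ((k : ℤ) + 1) + (b - a) * (j : ℤ) = (m - b) - b * k + (b - a) * j := by
        ring
      push_cast
      rw [h]
    rw [show k + 1 + 1 = k + 2 from rfl]
    have expand : ∑ j ∈ Finset.range (k + 2),
        ((k + 1).choose j : ℂ) * (f₁ / f₂) ^ j * X (m - b * (k + 1 : ℕ) + (b - a) * j)
        = (∑ j ∈ Finset.range (k + 1),
            (k.choose j : ℂ) * (f₁ / f₂) ^ (j + 1) * X (m - b * (k + 1 : ℕ) + (b - a) * ((j : ℤ) + 1)))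
          + ∑ j ∈ Finset.range (k + 2),
            (k.choose j : ℂ) * (f₁ / f₂) ^ j * X (m - b * (k + 1 : ℕ) + (b - a) * j) := by
      rw [Finset.sum_range_succ' (f := fun j =>
        ((k + 1).choose j : ℂ) * (f₁ / f₂) ^ j * X (m - b * (k + 1 : ℕ) + (b - a) * j)),
        Finset.sum_range_succ' (f := fun j =>
        ((k).choose j : ℂ) * (f₁ / f₂) ^ j * X (m - b * (k + 1 : ℕ) + (b - a) * j))]
      simp only [Nat.choose_succ_succ, Nat.cast_add, Nat.choose_zero_right, Nat.cast_one,
        Nat.cast_ofNat, pow_zero, mul_one, one_mul, Nat.cast_zero, mul_zero, add_zero]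
      simp only [add_mul, Finset.sum_add_distrib]
      push_cast
      ring
    rw [expand, hA, hB]
    rw [hX m]
    field_simp
    ring
end

section
/- Let X : ℤ → ℂ satisfy the third order recurrence X_m = f_1·X_{m−a} + f_2·X_{m−b} + f_3·X_{m−c} for all integers m, with f_1, f_2, f_3 nonzero complex constants and a, b, c integers. Then for every integer m and nonnegative integer k: ∑_{j=0}^{k} ∑_{s=0}^{j} C(k,j)·C(j,s)·(f_2/f_3)^j·(f_1/f_2)^s·X_{m−ck+(c−b)j+(b−a)s} = X_m/f_3^k. -/
/-!
Writing `S` for the unit shift `(S Y) m = Y (m - 1)` on sequences, the recurrence says that `X` is a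
fixed point of `T = f₁ Sᵃ + f₂ Sᵇ + f₃ Sᶜ`, hence of `Tᵏ`. The shifts commute, so `Tᵏ` expands by the
trinomial theorem into `∑ C(k,j) C(j,s) f₁ˢ f₂ʲ⁻ˢ f₃ᵏ⁻ʲ S^(as + b(j-s) + c(k-j))`; dividing by `f₃ᵏ`
gives the identity.
-/

open Finset

theorem Commute.add_add_pow {R : Type*} [Semiring R] {x y z : R} (hxy : Commute x y)
    (hxz : Commute x z) (hyz : Commute y z) (n : ℕ) :
    (x + y + z) ^ n = ∑ j ∈ range (n + 1), ∑ s ∈ range (j + 1),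
      (n.choose j * j.choose s) • (x ^ s * y ^ (j - s) * z ^ (n - j)) := by
  rw [(hxz.add_left hyz).add_pow]
  refine sum_congr rfl fun j _ => ?_
  rw [hxy.add_pow, sum_mul, sum_mul]
  refine sum_congr rfl fun s _ => ?_
  rw [mul_assoc _ (j.choose s : R), Nat.cast_comm, ← mul_assoc, mul_assoc, ← Nat.cast_mul,
    nsmul_eq_mul', mul_comm (j.choose s)]

section Shift
variable {R M G : Type*} [CommSemiring R] [AddCommMonoid M] [Module R M] [AddCommGroup G]

variable (R M) in
def shift (d : G) : Module.End R (G → M) := LinearMap.funLeft R M (· - d)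

@[simp] theorem shift_apply (d : G) (Y : G → M) (m : G) : shift R M d Y m = Y (m - d) := rfl

theorem shift_add (d e : G) : shift R M (d + e) = shift R M d * shift R M e :=
  LinearMap.ext fun Y => funext fun m => by simp [sub_sub]

theorem shift_zero : shift R M (0 : G) = 1 :=
  LinearMap.ext fun Y => funext fun m => by simp

theorem shift_nsmul (n : ℕ) (d : G) : shift R M (n • d) = shift R M d ^ n := by
  induction n with
  | zero => rw [zero_nsmul, shift_zero, pow_zero]
  | succ n ih => rw [succ_nsmul, shift_add, ih, pow_succ]

theorem commute_shift (d e : G) : Commute (shift R M d) (shift R M e) := by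
  rw [Commute, SemiconjBy, ← shift_add, ← shift_add, add_comm]

theorem smul_shift_pow (f : R) (d : G) (n : ℕ) :
    (f • shift R M d) ^ n = f ^ n • shift R M (n • d) := by
  rw [smul_pow, shift_nsmul]

theorem trinomial_shift_pow_apply (f₁ f₂ f₃ : R) (a b c : G) (k : ℕ) (Y : G → M) (m : G) :
    ((f₁ • shift R M a + f₂ • shift R M b + f₃ • shift R M c) ^ k) Y m =
      ∑ j ∈ range (k + 1), ∑ s ∈ range (j + 1), (k.choose j * j.choose s) •
        (f₁ ^ s * f₂ ^ (j - s) * f₃ ^ (k - j)) • Y (m - (s • a + (j - s) • b + (k - j) • c)) := by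
  have hcomm (f f' : R) (d e : G) : Commute (f • shift R M d) (f' • shift R M e) :=
    ((commute_shift d e).smul_left f).smul_right f'
  rw [Commute.add_add_pow (hcomm _ _ _ _) (hcomm _ _ _ _) (hcomm _ _ _ _)]
  simp only [LinearMap.sum_apply, Finset.sum_apply]
  refine sum_congr rfl fun j _ => sum_congr rfl fun s _ => ?_
  simp only [smul_shift_pow, smul_mul_smul, ← shift_add, LinearMap.smul_apply, Pi.smul_apply,
    shift_apply]

end Shift

theorem stmt18_general (X : ℤ → ℂ) (f₁ f₂ f₃ : ℂ) (hf₂ : f₂ ≠ 0) (hf₃ : f₃ ≠ 0)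
    (a b c : ℤ)
    (hX : ∀ m : ℤ, X m = f₁ * X (m - a) + f₂ * X (m - b) + f₃ * X (m - c)) :
    ∀ (m : ℤ) (k : ℕ),
      ∑ j ∈ Finset.range (k + 1), ∑ s ∈ Finset.range (j + 1),
          (k.choose j : ℂ) * (j.choose s : ℂ) * (f₂ / f₃) ^ j * (f₁ / f₂) ^ s *
            X (m - c * k + (c - b) * j + (b - a) * s) =
        X m / f₃ ^ k := by
  intro m k
  set T := f₁ • shift ℂ ℂ a + f₂ • shift ℂ ℂ b + f₃ • shift ℂ ℂ c
  have hfix : Function.IsFixedPt T X := funext fun m => by simp [T, hX m]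
  have hpow : (T ^ k) X = X := by rw [Module.End.pow_apply]; exact hfix.iterate k
  rw [eq_div_iff (pow_ne_zero k hf₃), ← congrFun hpow m, trinomial_shift_pow_apply, sum_mul]
  refine sum_congr rfl fun j hj => ?_
  rw [sum_mul]
  refine sum_congr rfl fun s hs => ?_
  obtain ⟨u, rfl⟩ := Nat.exists_eq_add_of_le (Nat.lt_succ_iff.mp (mem_range.mp hj))
  obtain ⟨t, rfl⟩ := Nat.exists_eq_add_of_le (Nat.lt_succ_iff.mp (mem_range.mp hs))
  have hcoef :
      (f₂ / f₃) ^ (s + t) * (f₁ / f₂) ^ s * f₃ ^ (s + t + u) = f₁ ^ s * f₂ ^ t * f₃ ^ u := by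
    rw [div_pow, div_pow, pow_add f₃ (s + t), pow_add f₂ s t]
    field_simp
  have hidx : m - c * ↑(s + t + u) + (c - b) * ↑(s + t) + (b - a) * ↑s
      = m - (s • a + t • b + u • c) := by
    push_cast
    ring
  simp only [Nat.add_sub_cancel_left, nsmul_eq_mul, smul_eq_mul, Nat.cast_mul] at hidx ⊢
  rw [hidx]
  linear_combination
    ((s + t + u).choose (s + t) * (s + t).choose s * X (m - (s * a + t * b + u * c)) : ℂ) * hcoef

theorem stmt18 (X : ℤ → ℂ) (f₁ f₂ f₃ : ℂ) (hf₁ : f₁ ≠ 0) (hf₂ : f₂ ≠ 0) (hf₃ : f₃ ≠ 0)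
    (a b c : ℤ)
    (hX : ∀ m : ℤ, X m = f₁ * X (m - a) + f₂ * X (m - b) + f₃ * X (m - c)) :
    ∀ (m : ℤ) (k : ℕ),
      ∑ j ∈ Finset.range (k + 1), ∑ s ∈ Finset.range (j + 1),
          (k.choose j : ℂ) * (j.choose s : ℂ) * (f₂ / f₃) ^ j * (f₁ / f₂) ^ s *
            X (m - c * k + (c - b) * j + (b - a) * s) =
        X m / f₃ ^ k :=
  stmt18_general X f₁ f₂ f₃ hf₂ hf₃ a b c hX
end
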